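/- Let P and Q be probability measures on a measurable space 𝒳 with P absolutely continuous with respect to Q, let r = dP/dQ, fix α, β, γ > 0, and set f*(x) = (r(x) − α)/(β r(x) + γ). Then f* is bounded (−α/γ ≤ f* < 1/β everywhere on the set where r ≥ 0), f* ∈ L²(P) ∩ L²(Q), and the optimal value of the RPC functional satisfies 0 ≤ J(f*) ≤ 1/(2β) + α²/(2γ), where J(g) = E_P[g] − α E_Q[g] − (β/2) E_P[g²] − (γ/2) E_Q[g²]. -/

import Mathlib

/-!
With `r = dP/dQ`, a change of measure writes `J(g)` as `∫ ((r - α) g - (β r + γ)/2 · g²) dQ`, a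
pointwise concave quadratic in `g` whose value at its vertex `f* = (r - α)/(β r + γ)` is
`(r - α)² / (2 (β r + γ))`. This is nonnegative and, by Sedrakyan's inequality, at most
`r/(2β) + α²/(2γ)`, whose `Q`-integral is `1/(2β) + α²/(2γ)` because `∫ r dQ = P(X) = 1`.
-/

open MeasureTheory

/-- The RPC functional `J(g) = E_P[g] - α E_Q[g] - (β/2) E_P[g²] - (γ/2) E_Q[g²]`. -/
noncomputable def rpcJ {X : Type*} [MeasurableSpace X] (P Q : Measure X) (α β γ : ℝ)
    (g : X → ℝ) : ℝ :=
  (∫ x, g x ∂P) - α * (∫ x, g x ∂Q) - β / 2 * (∫ x, (g x) ^ 2 ∂P)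
    - γ / 2 * (∫ x, (g x) ^ 2 ∂Q)

/-- The relative density ratio `f*(x) = (r(x) - α)/(β r(x) + γ)` with `r = dP/dQ`. -/
noncomputable def relRatio {X : Type*} [MeasurableSpace X] (P Q : Measure X) (α β γ : ℝ)
    (x : X) : ℝ :=
  ((P.rnDeriv Q x).toReal - α) / (β * (P.rnDeriv Q x).toReal + γ)

section RatioBounds

variable {α β γ t : ℝ}

lemma neg_div_le_sub_div_mul_add (hα : 0 ≤ α) (hβ : 0 ≤ β) (hγ : 0 < γ) (ht : 0 ≤ t) :
    -(α / γ) ≤ (t - α) / (β * t + γ) := by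
  rw [neg_div', div_le_div_iff₀ hγ (by positivity)]
  nlinarith [mul_nonneg (mul_nonneg hα hβ) ht]

lemma sub_div_mul_add_lt_inv (hα : 0 ≤ α) (hβ : 0 < β) (hγ : 0 < γ) (ht : 0 ≤ t) :
    (t - α) / (β * t + γ) < 1 / β := by
  rw [div_lt_div_iff₀ (by positivity) hβ]
  nlinarith

lemma mul_div_sub_half_mul_div_sq (a : ℝ) {D : ℝ} (hD : D ≠ 0) :
    a * (a / D) - D / 2 * (a / D) ^ 2 = a ^ 2 / (2 * D) := by
  field_simp
  ring

/-- Sedrakyan's inequality `(a + b)² / (x + y) ≤ a² / x + b² / y` with `a = t`, `b = -α`,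
`x = β t`, `y = γ`. -/
lemma sq_sub_div_le (hβ : 0 < β) (hγ : 0 < γ) (ht : 0 ≤ t) :
    (t - α) ^ 2 / (2 * (β * t + γ)) ≤ t / (2 * β) + α ^ 2 / (2 * γ) := by
  rw [div_add_div _ _ (by positivity) (by positivity),
    div_le_div_iff₀ (by positivity) (by positivity)]
  nlinarith [mul_nonneg ht (sq_nonneg (β * α + γ))]

end RatioBounds

section RPC

variable {X : Type*} [MeasurableSpace X] {P Q : Measure X}

lemma rpcJ_eq_integral [IsFiniteMeasure P] [IsFiniteMeasure Q] (hPQ : P ≪ Q) (α β γ : ℝ)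
    {g : X → ℝ} (hgP : MemLp g 2 P) (hgQ : MemLp g 2 Q) :
    rpcJ P Q α β γ g = ∫ x, (((P.rnDeriv Q x).toReal - α) * g x
      - (β * (P.rnDeriv Q x).toReal + γ) / 2 * g x ^ 2) ∂Q := by
  have hrg : Integrable (fun x ↦ (P.rnDeriv Q x).toReal * g x) Q :=
    (integrable_toReal_rnDeriv_mul_iff hPQ).2 (hgP.integrable one_le_two)
  have hrg2 : Integrable (fun x ↦ (P.rnDeriv Q x).toReal * g x ^ 2) Q :=
    (integrable_toReal_rnDeriv_mul_iff hPQ).2 hgP.integrable_sq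
  have hg := hgQ.integrable one_le_two
  have hg2 := hgQ.integrable_sq
  have hA : Integrable (fun x ↦ (P.rnDeriv Q x).toReal * g x - α * g x) Q :=
    hrg.sub (hg.const_mul α)
  have hB : Integrable (fun x ↦ (P.rnDeriv Q x).toReal * g x - α * g x
      - β / 2 * ((P.rnDeriv Q x).toReal * g x ^ 2)) Q :=
    hA.sub (hrg2.const_mul (β / 2))
  calc rpcJ P Q α β γ g
      = ∫ x, ((P.rnDeriv Q x).toReal * g x - α * g x
          - β / 2 * ((P.rnDeriv Q x).toReal * g x ^ 2) - γ / 2 * g x ^ 2) ∂Q := by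
        rw [integral_sub hB (hg2.const_mul _), integral_sub hA (hrg2.const_mul _),
          integral_sub hrg (hg.const_mul _), integral_const_mul, integral_const_mul,
          integral_const_mul, integral_toReal_rnDeriv_mul hPQ, integral_toReal_rnDeriv_mul hPQ,
          rpcJ]
    _ = _ := by
        congr 1 with x
        ring

lemma measurable_relRatio (P Q : Measure X) (α β γ : ℝ) : Measurable (relRatio P Q α β γ) := by
  unfold relRatio
  fun_prop

variable {α β γ : ℝ}

lemma relRatio_bounds (hα : 0 ≤ α) (hβ : 0 < β) (hγ : 0 < γ) (x : X) :
    -(α / γ) ≤ relRatio P Q α β γ x ∧ relRatio P Q α β γ x < 1 / β :=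
  ⟨neg_div_le_sub_div_mul_add hα hβ.le hγ ENNReal.toReal_nonneg,
    sub_div_mul_add_lt_inv hα hβ hγ ENNReal.toReal_nonneg⟩

lemma memLp_relRatio (μ : Measure X) [IsFiniteMeasure μ] (p : ENNReal) (hα : 0 ≤ α) (hβ : 0 < β)
    (hγ : 0 < γ) :
    MemLp (relRatio P Q α β γ) p μ := by
  refine .of_bound (measurable_relRatio P Q α β γ).aestronglyMeasurable (max (α / γ) (1 / β))
    (.of_forall fun x ↦ ?_)
  obtain ⟨hlow, hup⟩ := relRatio_bounds (P := P) (Q := Q) hα hβ hγ x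
  rw [Real.norm_eq_abs, abs_le]
  constructor
  · linarith [le_max_left (α / γ) (1 / β)]
  · linarith [le_max_right (α / γ) (1 / β)]

lemma rpcJ_relRatio [IsFiniteMeasure P] [IsFiniteMeasure Q] (hPQ : P ≪ Q) (hα : 0 ≤ α)
    (hβ : 0 < β) (hγ : 0 < γ) :
    rpcJ P Q α β γ (relRatio P Q α β γ) =
      ∫ x, ((P.rnDeriv Q x).toReal - α) ^ 2 / (2 * (β * (P.rnDeriv Q x).toReal + γ)) ∂Q := by
  rw [rpcJ_eq_integral hPQ α β γ (memLp_relRatio P 2 hα hβ hγ) (memLp_relRatio Q 2 hα hβ hγ)]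
  congr 1 with x
  exact mul_div_sub_half_mul_div_sq _ (by positivity)

end RPC

/-- Combination of Lemma 1 and Proposition 1: the optimal solution
`f* = (dP/dQ - α)/(β dP/dQ + γ)` of the RPC objective is bounded
(`-α/γ ≤ f* < 1/β` everywhere, since the density ratio is nonnegative), lies in
`L²(P) ∩ L²(Q)`, and the optimal value satisfies
`0 ≤ J(f*) ≤ 1/(2β) + α²/(2γ)`. -/
theorem rpc_optimal_value_bounds {X : Type*} [MeasurableSpace X] (P Q : Measure X)
    [IsProbabilityMeasure P] [IsProbabilityMeasure Q] (hPQ : P ≪ Q)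
    (α β γ : ℝ) (hα : 0 < α) (hβ : 0 < β) (hγ : 0 < γ) :
    (∀ x, -(α / γ) ≤ relRatio P Q α β γ x ∧ relRatio P Q α β γ x < 1 / β) ∧
    MemLp (relRatio P Q α β γ) 2 P ∧ MemLp (relRatio P Q α β γ) 2 Q ∧
    0 ≤ rpcJ P Q α β γ (relRatio P Q α β γ) ∧
    rpcJ P Q α β γ (relRatio P Q α β γ) ≤ 1 / (2 * β) + α ^ 2 / (2 * γ) := by
  have hr : Integrable (fun x ↦ (P.rnDeriv Q x).toReal) Q := Measure.integrable_toReal_rnDeriv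
  have hvalue_nonneg :
      ∀ x, 0 ≤ ((P.rnDeriv Q x).toReal - α) ^ 2 / (2 * (β * (P.rnDeriv Q x).toReal + γ)) :=
    fun x ↦ by positivity
  refine ⟨relRatio_bounds hα.le hβ hγ, memLp_relRatio P 2 hα.le hβ hγ,
    memLp_relRatio Q 2 hα.le hβ hγ, ?_, ?_⟩ <;> rw [rpcJ_relRatio hPQ hα.le hβ hγ]
  · exact integral_nonneg hvalue_nonneg
  · calc _ ≤ ∫ x, ((P.rnDeriv Q x).toReal / (2 * β) + α ^ 2 / (2 * γ)) ∂Q :=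
          integral_mono_of_nonneg (.of_forall hvalue_nonneg)
            ((hr.div_const _).add (integrable_const _))
            (.of_forall fun _ ↦ sq_sub_div_le hβ hγ ENNReal.toReal_nonneg)
      _ = 1 / (2 * β) + α ^ 2 / (2 * γ) := by
        rw [integral_add (hr.div_const _) (integrable_const _), integral_div,
          Measure.integral_toReal_rnDeriv hPQ]
        simp
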